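/- Fix ψ > 0 and a, b, c > 0 with a + b + c = 1. On the domain 𝒟 = {(x,y) ∈ ℝ²_{>0} : x < 1 + b, x − b < y < min{x, 1}}, define h(x,y) = (2−y)log(2−y) − (1−y)log(1−y) + (1+y)log(1+y) − y·log y + (c+x−y)log(c+x−y) − c·log c − (x−y)log(x−y) + (a+b+y−x)log(a+b+y−x) − a·log a − (b+y−x)log(b+y−x), and f(x) = (ψ+x)log(ψ+x) − ψ·log ψ − x·log x. Then both eigenvalues of the Hessian of f + h at every point of 𝒟 are at most −ψ/(2(ψ+2)). -/

import Mathlib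

open Real

/-- The entropy-type function `h(x,y)` on the domain `𝒟`. -/
noncomputable def hFn (a b c x y : ℝ) : ℝ :=
  (2 - y) * Real.log (2 - y) - (1 - y) * Real.log (1 - y) + (1 + y) * Real.log (1 + y) -
    y * Real.log y + (c + x - y) * Real.log (c + x - y) - c * Real.log c -
    (x - y) * Real.log (x - y) + (a + b + y - x) * Real.log (a + b + y - x) -
    a * Real.log a - (b + y - x) * Real.log (b + y - x)

/-- The function `f(x) = (ψ+x)log(ψ+x) − ψ log ψ − x log x`. -/
noncomputable def fFn (ψ x : ℝ) : ℝ :=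
  (ψ + x) * Real.log (ψ + x) - ψ * Real.log ψ - x * Real.log x

/-- `g = f + h`. -/
noncomputable def gFn (a b c ψ x y : ℝ) : ℝ := fFn ψ x + hFn a b c x y

/-- Membership in the domain `𝒟 = {(x,y) : 0 < x, 0 < y, x < 1+b, x−b < y < min(x,1)}`. -/
def memD (b x y : ℝ) : Prop :=
  0 < x ∧ 0 < y ∧ x < 1 + b ∧ x - b < y ∧ y < x ∧ y < 1

/-- The Hessian matrix of `g = f + h` at `(x, y)`, with entries given by iterated `deriv`s. -/
noncomputable def hessG (a b c ψ x y : ℝ) : Matrix (Fin 2) (Fin 2) ℝ :=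
  !![deriv (fun t => deriv (fun s => gFn a b c ψ s y) t) x,
     deriv (fun t => deriv (fun s => gFn a b c ψ s t) x) y;
     deriv (fun t => deriv (fun s => gFn a b c ψ t s) y) x,
     deriv (fun t => deriv (fun s => gFn a b c ψ x s) t) y]

/-!
Splitting off the `x - y` terms, `h(x, y) = φ(y) + χ(x - y)`, so the Hessian of `f + h` is
`diag(f''(x), φ''(y)) + χ''(x - y) • !![1, -1; -1, 1]`. On `𝒟` the term `χ''` is nonpositive, so
Gershgorin's theorem bounds every eigenvalue by `max(f''(x), φ''(y))`; and
`f''(x) = -ψ / (x (ψ + x)) ≤ -ψ / (2 (ψ + 2))` because `x < 1 + b < 2`, while `φ'' ≤ -1`.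
-/

open Filter Topology Matrix Set

theorem Matrix.eigenvalue_le_of_diag_add_sum_abs_le {n : Type*} [Fintype n] [DecidableEq n]
    {A : Matrix n n ℝ} {k μ : ℝ} {v : n → ℝ} (hv : v ≠ 0) (hμ : A *ᵥ v = μ • v)
    (hA : ∀ i, A i i + ∑ j ∈ Finset.univ.erase i, |A i j| ≤ k) : μ ≤ k := by
  obtain ⟨i, hi⟩ := eigenvalue_mem_ball
    (Module.End.hasEigenvalue_of_hasEigenvector ⟨Module.End.mem_eigenspace_iff.2 hμ, hv⟩)
  rw [Metric.mem_closedBall, Real.dist_eq] at hi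
  simp only [Real.norm_eq_abs] at hi
  linarith [le_abs_self (μ - A i i), hA i]

theorem Matrix.eigenvalue_le_of_fin_two {p q r s k μ : ℝ} {v : Fin 2 → ℝ} (hv : v ≠ 0)
    (hμ : !![p, q; r, s] *ᵥ v = μ • v) (h₀ : p + |q| ≤ k) (h₁ : s + |r| ≤ k) : μ ≤ k := by
  refine Matrix.eigenvalue_le_of_diag_add_sum_abs_le hv hμ (Fin.forall_fin_two.2 ⟨?_, ?_⟩) <;>
    simpa [Finset.univ_fin2]

noncomputable def hessian (G : ℝ → ℝ → ℝ) (x y : ℝ) : Matrix (Fin 2) (Fin 2) ℝ :=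
  !![deriv (fun t => deriv (fun s => G s y) t) x, deriv (fun t => deriv (fun s => G s t) x) y;
     deriv (fun t => deriv (fun s => G t s) y) x, deriv (fun t => deriv (fun s => G x s) t) y]

theorem hessian_add_add_comp_sub {F Φ X F' Φ' X' : ℝ → ℝ} {F'' Φ'' X'' x y : ℝ}
    (hF : ∀ᶠ t in 𝓝 x, HasDerivAt F (F' t) t) (hF' : HasDerivAt F' F'' x)
    (hΦ : ∀ᶠ t in 𝓝 y, HasDerivAt Φ (Φ' t) t) (hΦ' : HasDerivAt Φ' Φ'' y)
    (hX : ∀ᶠ z in 𝓝 (x - y), HasDerivAt X (X' z) z) (hX' : HasDerivAt X' X'' (x - y)) :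
    hessian (fun s t => F s + Φ t + X (s - t)) x y =
      !![F'' + X'', -X''; -X'', Φ'' + X''] := by
  have hXr : ∀ᶠ t in 𝓝 x, HasDerivAt X (X' (t - y)) (t - y) :=
    (continuous_sub_right y).tendsto' x (x - y) rfl |>.eventually hX
  have hXl : ∀ᶠ t in 𝓝 y, HasDerivAt X (X' (x - t)) (x - t) :=
    (continuous_sub_left x).tendsto' y (x - y) rfl |>.eventually hX
  have h₀₀ : (fun t => deriv (fun s => F s + Φ y + X (s - y)) t) =ᶠ[𝓝 x]
      fun t => F' t + X' (t - y) := by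
    filter_upwards [hF, hXr] with t hFt hXt
    exact ((hFt.add_const _).add (hXt.comp_sub_const t y)).deriv
  have h₀₁ : (fun t => deriv (fun s => F s + Φ t + X (s - t)) x) =ᶠ[𝓝 y]
      fun t => F' x + X' (x - t) := by
    filter_upwards [hXl] with t hXt
    exact ((hF.self_of_nhds.add_const _).add (hXt.comp_sub_const x t)).deriv
  have h₁₀ : (fun t => deriv (fun s => F t + Φ s + X (t - s)) y) =ᶠ[𝓝 x]
      fun t => Φ' y - X' (t - y) := by
    filter_upwards [hXr] with t hXt
    exact ((hΦ.self_of_nhds.const_add _).add (hXt.comp_const_sub t y)).deriv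
  have h₁₁ : (fun t => deriv (fun s => F x + Φ s + X (x - s)) t) =ᶠ[𝓝 y]
      fun t => Φ' t - X' (x - t) := by
    filter_upwards [hΦ, hXl] with t hΦt hXt
    exact ((hΦt.const_add _).add (hXt.comp_const_sub x t)).deriv
  ext i j
  fin_cases i <;> fin_cases j
  · exact h₀₀.deriv_eq.trans (hF'.add (hX'.comp_sub_const x y)).deriv
  · exact h₀₁.deriv_eq.trans ((hX'.comp_const_sub x y).const_add _).deriv
  · exact h₁₀.deriv_eq.trans ((hX'.comp_sub_const x y).const_sub _).deriv
  · exact h₁₁.deriv_eq.trans ((hΦ'.sub (hX'.comp_const_sub x y)).deriv.trans (sub_neg_eq_add _ _))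

noncomputable def phiFn (y : ℝ) : ℝ :=
  (2 - y) * log (2 - y) - (1 - y) * log (1 - y) + (1 + y) * log (1 + y) - y * log y

noncomputable def chiFn (a b c z : ℝ) : ℝ :=
  (c + z) * log (c + z) - c * log c - z * log z + (a + b - z) * log (a + b - z) - a * log a -
    (b - z) * log (b - z)

theorem gFn_eq (a b c ψ : ℝ) :
    gFn a b c ψ = fun x y => fFn ψ x + phiFn y + chiFn a b c (x - y) := by
  funext x y
  simp only [gFn, hFn, phiFn, chiFn]
  ring_nf

theorem hasDerivAt_fFn {ψ x : ℝ} (hψ : 0 ≤ ψ) (hx : x ∈ Ioi 0) :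
    HasDerivAt (fFn ψ) (log (ψ + x) - log x) x := by
  have hψx : ψ + x ≠ 0 := by linarith [mem_Ioi.1 hx]
  have := (((hasDerivAt_mul_log hψx).comp_const_add ψ x).sub_const (ψ * log ψ)).sub
    (hasDerivAt_mul_log (ne_of_gt hx))
  exact this.congr_deriv (by ring)

theorem hasDerivAt_log_add_sub_log {ψ x : ℝ} (hψ : 0 ≤ ψ) (hx : x ∈ Ioi 0) :
    HasDerivAt (fun t => log (ψ + t) - log t) ((ψ + x)⁻¹ - x⁻¹) x :=
  ((hasDerivAt_log (by linarith [mem_Ioi.1 hx])).comp_const_add ψ x).sub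
    (hasDerivAt_log (ne_of_gt hx))

theorem hasDerivAt_phiFn {y : ℝ} (hy : y ∈ Ioo 0 1) :
    HasDerivAt phiFn (-log (2 - y) + log (1 - y) + log (1 + y) - log y) y := by
  obtain ⟨hy0, hy1⟩ := hy
  have := ((((hasDerivAt_mul_log (by linarith : (2 : ℝ) - y ≠ 0)).comp_const_sub 2 y).sub
    ((hasDerivAt_mul_log (by linarith : (1 : ℝ) - y ≠ 0)).comp_const_sub 1 y)).add
    ((hasDerivAt_mul_log (by linarith : (1 : ℝ) + y ≠ 0)).comp_const_add 1 y)).sub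
    (hasDerivAt_mul_log hy0.ne')
  exact this.congr_deriv (by ring)

theorem hasDerivAt_phiDeriv {y : ℝ} (hy : y ∈ Ioo 0 1) :
    HasDerivAt (fun t => -log (2 - t) + log (1 - t) + log (1 + t) - log t)
      ((2 - y)⁻¹ - (1 - y)⁻¹ + (1 + y)⁻¹ - y⁻¹) y := by
  obtain ⟨hy0, hy1⟩ := hy
  have := (((((hasDerivAt_log (by linarith : (2 : ℝ) - y ≠ 0)).comp_const_sub 2 y).neg.add
    ((hasDerivAt_log (by linarith : (1 : ℝ) - y ≠ 0)).comp_const_sub 1 y)).add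
    ((hasDerivAt_log (by linarith : (1 : ℝ) + y ≠ 0)).comp_const_add 1 y)).sub
    (hasDerivAt_log hy0.ne'))
  exact this.congr_deriv (by ring)

theorem hasDerivAt_chiFn {a b c z : ℝ} (ha : 0 ≤ a) (hc : 0 ≤ c) (hz : z ∈ Ioo 0 b) :
    HasDerivAt (chiFn a b c) (log (c + z) - log z - log (a + b - z) + log (b - z)) z := by
  obtain ⟨hz0, hzb⟩ := hz
  have := (((((((hasDerivAt_mul_log (by linarith : c + z ≠ 0)).comp_const_add c z).sub_const
    (c * log c)).sub (hasDerivAt_mul_log hz0.ne')).add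
    ((hasDerivAt_mul_log (by linarith : a + b - z ≠ 0)).comp_const_sub (a + b) z)).sub_const
    (a * log a)).sub ((hasDerivAt_mul_log (by linarith : b - z ≠ 0)).comp_const_sub b z))
  exact this.congr_deriv (by ring)

theorem hasDerivAt_chiDeriv {a b c z : ℝ} (ha : 0 ≤ a) (hc : 0 ≤ c) (hz : z ∈ Ioo 0 b) :
    HasDerivAt (fun t => log (c + t) - log t - log (a + b - t) + log (b - t))
      ((c + z)⁻¹ - z⁻¹ + (a + b - z)⁻¹ - (b - z)⁻¹) z := by
  obtain ⟨hz0, hzb⟩ := hz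
  have := (((((hasDerivAt_log (by linarith : c + z ≠ 0)).comp_const_add c z).sub
    (hasDerivAt_log hz0.ne')).sub
    ((hasDerivAt_log (by linarith : a + b - z ≠ 0)).comp_const_sub (a + b) z)).add
    ((hasDerivAt_log (by linarith : b - z ≠ 0)).comp_const_sub b z))
  exact this.congr_deriv (by ring)

theorem inv_add_sub_inv_le {ψ x : ℝ} (hψ : 0 ≤ ψ) (hx : 0 < x) (hx2 : x ≤ 2) :
    (ψ + x)⁻¹ - x⁻¹ ≤ -ψ / (2 * (ψ + 2)) := by
  calc (ψ + x)⁻¹ - x⁻¹ = -ψ / (x * (ψ + x)) := by field_simp; ring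
    _ ≤ -ψ / (2 * (ψ + 2)) := by
      rw [neg_div, neg_div, neg_le_neg_iff]
      exact div_le_div_of_nonneg_left hψ (by positivity) (by nlinarith)

theorem phiDeriv2_le {y : ℝ} (hy : y ∈ Ioo 0 1) :
    (2 - y)⁻¹ - (1 - y)⁻¹ + (1 + y)⁻¹ - y⁻¹ ≤ -1 := by
  obtain ⟨hy0, hy1⟩ := hy
  have h₁ : (2 - y)⁻¹ - (1 - y)⁻¹ ≤ -2⁻¹ := by
    rw [inv_sub_inv (by linarith) (by linarith), div_le_iff₀ (by nlinarith)]
    nlinarith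
  have h₂ : (1 + y)⁻¹ - y⁻¹ ≤ -2⁻¹ := by
    rw [inv_sub_inv (by linarith) (by linarith), div_le_iff₀ (by nlinarith)]
    nlinarith
  linarith

theorem chiDeriv2_nonpos {a b c z : ℝ} (ha : 0 ≤ a) (hc : 0 ≤ c) (hz : z ∈ Ioo 0 b) :
    (c + z)⁻¹ - z⁻¹ + (a + b - z)⁻¹ - (b - z)⁻¹ ≤ 0 := by
  obtain ⟨hz0, hzb⟩ := hz
  linarith [inv_anti₀ hz0 (le_add_of_nonneg_left hc : z ≤ c + z),
    inv_anti₀ (sub_pos.2 hzb) (by linarith : b - z ≤ a + b - z)]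

theorem hessian_eigenvalues_bound_general (a b c ψ : ℝ) (ha : 0 < a) (hc : 0 < c)
    (habc : a + b + c = 1) (hψ : 0 < ψ) :
    ∀ x y : ℝ, memD b x y → ∀ μ : ℝ, ∀ v : Fin 2 → ℝ, v ≠ 0 →
      (hessG a b c ψ x y).mulVec v = μ • v → μ ≤ -ψ / (2 * (ψ + 2)) := by
  rintro x y ⟨hx, hy, -, hxy, hyx, hy1⟩ μ v hv hμ
  have hz : x - y ∈ Ioo 0 b := ⟨sub_pos.2 hyx, by linarith⟩
  have hH : hessG a b c ψ x y = hessian (gFn a b c ψ) x y := rfl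
  rw [hH, gFn_eq, hessian_add_add_comp_sub
    (eventually_of_mem (Ioi_mem_nhds hx) fun _ => hasDerivAt_fFn hψ.le)
    (hasDerivAt_log_add_sub_log hψ.le hx)
    (eventually_of_mem (Ioo_mem_nhds hy hy1) fun _ => hasDerivAt_phiFn)
    (hasDerivAt_phiDeriv ⟨hy, hy1⟩)
    (eventually_of_mem (Ioo_mem_nhds hz.1 hz.2) fun _ => hasDerivAt_chiFn ha.le hc.le)
    (hasDerivAt_chiDeriv ha.le hc.le hz)] at hμ
  have hχ := abs_of_nonneg (neg_nonneg.2 (chiDeriv2_nonpos ha.le hc.le hz))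
  refine Matrix.eigenvalue_le_of_fin_two hv hμ ?_ ?_ <;> rw [hχ]
  · linarith [inv_add_sub_inv_le hψ.le hx (by linarith : x ≤ 2)]
  · have : -1 ≤ -ψ / (2 * (ψ + 2)) := by
      rw [neg_div, neg_le_neg_iff, div_le_one (by positivity)]
      linarith
    linarith [phiDeriv2_le ⟨hy, hy1⟩]

/-- Both eigenvalues of the Hessian of `f + h` at every point of `𝒟` are at most
`−ψ/(2(ψ+2))`. -/
theorem hessian_eigenvalues_bound (a b c ψ : ℝ) (ha : 0 < a) (hb : 0 < b) (hc : 0 < c)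
    (habc : a + b + c = 1) (hψ : 0 < ψ) :
    ∀ x y : ℝ, memD b x y → ∀ μ : ℝ, ∀ v : Fin 2 → ℝ, v ≠ 0 →
      (hessG a b c ψ x y).mulVec v = μ • v → μ ≤ -ψ / (2 * (ψ + 2)) :=
  hessian_eigenvalues_bound_general a b c ψ ha hc habc hψ
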